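/- Consider an N-agent system on finite spaces X, U with bounded Lipschitz reward r: |r(x,u,μ,ν)| ≤ M_R and |r(x,u,μ₁,ν₁) − r(x,u,μ₂,ν₂)| ≤ L_R(|μ₁−μ₂|₁ + |ν₁−ν₂|₁). Given joint state x_t^N with empirical distribution μ_t^N, agents independently sample u_t^i ∼ π_t(x_t^i, μ_t^N); let ν_t^N be the empirical action distribution. With r^MF(μ,π) = Σ_x Σ_u r(x,u,μ,ν^MF(μ,π)) π(x,μ)(u) μ(x), one has E| (1/N) Σ_{i=1}^N r(x_t^i, u_t^i, μ_t^N, ν_t^N) − r^MF(μ_t^N, π_t) | ≤ M_R/√N + L_R √(|U|)/√N. -/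

import Mathlib

open Finset

def IsPmf {X : Type*} [Fintype X] (μ : X → ℝ) : Prop :=
  (∀ x, 0 ≤ μ x) ∧ ∑ x, μ x = 1

noncomputable def l1 {X : Type*} [Fintype X] (f : X → ℝ) : ℝ := ∑ x, |f x|

/-- Empirical distribution of a configuration of `N` agents. -/
noncomputable def emp {X : Type*} [Fintype X] [DecidableEq X] {N : ℕ}
    (s : Fin N → X) : X → ℝ :=
  fun x => (∑ i, if s i = x then (1 : ℝ) else 0) / N

/-- The mean-field action distribution `ν^MF(μ, π)`. -/
noncomputable def nuMF {X U : Type*} [Fintype X] [Fintype U]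
    (μ : X → ℝ) (π : X → (X → ℝ) → U → ℝ) : U → ℝ :=
  fun u => ∑ x, π x μ u * μ x

/-- The mean-field average reward `r^MF(μ, π)`. -/
noncomputable def rMF {X U : Type*} [Fintype X] [Fintype U]
    (r : X → U → (X → ℝ) → (U → ℝ) → ℝ)
    (μ : X → ℝ) (π : X → (X → ℝ) → U → ℝ) : ℝ :=
  ∑ x, ∑ u, r x u μ (nuMF μ π) * π x μ u * μ x

/-!
Split the deviation at the mean-field action distribution `ν = ν^MF(μ^N, π)`. By Lipschitz
continuity, replacing `ν^N` by `ν` costs `L_R |ν^N - ν|₁`; what remains is an average of `N`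
independent rewards bounded by `M_R`, minus its mean, whose expected absolute value is at most
`M_R / √N` by `E|S| ≤ √(E S²)` and additivity of variances. Since `μ^N` is the empirical
distribution of the states, `ν` is exactly the mean of `ν^N`, and each `ν^N(u)` is an average of
independent indicators, so `E|ν^N(u) - ν(u)| ≤ √(ν(u)) / √N`; Cauchy–Schwarz then bounds
`∑ᵤ √(ν(u))` by `√|U|`.
-/

section ProductLaw

variable {ι U : Type*} [Fintype ι] [DecidableEq ι] [Fintype U]

/-- Expectation of `F` when the coordinates `a i` are drawn independently from `p i`. -/
noncomputable def prodExpect (p : ι → U → ℝ) (F : (ι → U) → ℝ) : ℝ :=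
  ∑ a : ι → U, (∏ i, p i (a i)) * F a

variable {p : ι → U → ℝ}

theorem prodExpect_prod (hp : ∀ i, ∑ u, p i u = 1) (s : Finset ι) (g : ι → U → ℝ) :
    prodExpect p (fun a => ∏ i ∈ s, g i (a i)) = ∏ i ∈ s, ∑ u, p i u * g i u := by
  have hprod (a : ι → U) : (∏ i, p i (a i)) * ∏ i ∈ s, g i (a i)
      = ∏ i, p i (a i) * if i ∈ s then g i (a i) else 1 := by
    rw [prod_mul_distrib, Fintype.prod_ite_mem]
  rw [prodExpect, sum_congr rfl fun a _ => hprod a,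
    ← Fintype.prod_sum fun i u => p i u * if i ∈ s then g i u else 1, ← Fintype.prod_ite_mem s]
  refine prod_congr rfl fun i _ => ?_
  split_ifs <;> simp [hp i]

theorem prodExpect_one (hp : ∀ i, ∑ u, p i u = 1) : prodExpect p (fun _ => 1) = 1 := by
  simpa using prodExpect_prod hp ∅ (fun _ _ => 1)

theorem prodExpect_mono (hp : ∀ i u, 0 ≤ p i u) {F G : (ι → U) → ℝ} (hFG : ∀ a, F a ≤ G a) :
    prodExpect p F ≤ prodExpect p G :=
  sum_le_sum fun a _ => mul_le_mul_of_nonneg_left (hFG a) (prod_nonneg fun i _ => hp i (a i))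

theorem prodExpect_abs_le_sqrt (hp : ∀ i, IsPmf (p i)) (F : (ι → U) → ℝ) :
    prodExpect p (fun a => |F a|) ≤ √(prodExpect p (fun a => F a ^ 2)) := by
  refine Real.le_sqrt_of_sq_le ?_
  have hw (a : ι → U) : 0 ≤ ∏ i, p i (a i) := prod_nonneg fun i _ => (hp i).1 (a i)
  have h := sum_sq_le_sum_mul_sum_of_sq_le_mul univ (r := fun a => (∏ i, p i (a i)) * |F a|)
    (fun a _ => hw a) (fun a _ => mul_nonneg (hw a) (sq_nonneg (F a)))
    (fun a _ => le_of_eq (by rw [mul_pow, sq_abs]; ring))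
  have hw1 : ∑ a : ι → U, ∏ i, p i (a i) = 1 := by
    simpa [prodExpect] using prodExpect_one fun i => (hp i).2
  rwa [hw1, one_mul] at h

theorem prodExpect_add (F G : (ι → U) → ℝ) :
    prodExpect p (fun a => F a + G a) = prodExpect p F + prodExpect p G := by
  simp only [prodExpect, mul_add, sum_add_distrib]

theorem prodExpect_const_mul (c : ℝ) (F : (ι → U) → ℝ) :
    prodExpect p (fun a => c * F a) = c * prodExpect p F := by
  simp only [prodExpect, mul_sum]
  exact sum_congr rfl fun a _ => by ring

theorem prodExpect_sum {κ : Type*} (s : Finset κ) (F : κ → (ι → U) → ℝ) :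
    prodExpect p (fun a => ∑ k ∈ s, F k a) = ∑ k ∈ s, prodExpect p (F k) := by
  simp only [prodExpect, mul_sum]
  exact sum_comm

theorem prodExpect_sq_sum_of_centered (hp : ∀ i, ∑ u, p i u = 1) (D : ι → U → ℝ)
    (hD : ∀ i, ∑ u, p i u * D i u = 0) :
    prodExpect p (fun a => (∑ i, D i (a i)) ^ 2) = ∑ i, ∑ u, p i u * D i u ^ 2 := by
  have hcross (i j : ι) : prodExpect p (fun a => D i (a i) * D j (a j))
      = if i = j then ∑ u, p i u * D i u ^ 2 else 0 := by
    split_ifs with hij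
    · subst hij; simpa [← sq] using prodExpect_prod hp {i} fun _ u => D i u ^ 2
    · simpa [prod_pair hij, hD i] using prodExpect_prod hp {i, j} D
  simp only [sq, sum_mul_sum, prodExpect_sum, hcross, sum_ite_eq, mem_univ, if_true]

theorem sum_mul_sub_mean_sq_le {q : U → ℝ} (hq : IsPmf q) (Y : U → ℝ) :
    ∑ u, q u * (Y u - ∑ v, q v * Y v) ^ 2 ≤ ∑ u, q u * Y u ^ 2 := by
  set m := ∑ v, q v * Y v
  have hexpand (u : U) :
      q u * (Y u - m) ^ 2 = q u * Y u ^ 2 - 2 * m * (q u * Y u) + m ^ 2 * q u := by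
    ring
  rw [sum_congr rfl fun u _ => hexpand u, sum_add_distrib, sum_sub_distrib, ← mul_sum,
    ← mul_sum, hq.2]
  nlinarith [sq_nonneg m]

theorem prodExpect_abs_sum_sub_mean_le (hp : ∀ i, IsPmf (p i)) (Y : ι → U → ℝ) :
    prodExpect p (fun a => |∑ i, (Y i (a i) - ∑ u, p i u * Y i u)|)
      ≤ √(∑ i, ∑ u, p i u * Y i u ^ 2) := by
  set D : ι → U → ℝ := fun i u => Y i u - ∑ v, p i v * Y i v
  have hD (i : ι) : ∑ u, p i u * D i u = 0 := by
    simp only [D, mul_sub, sum_sub_distrib, ← sum_mul, (hp i).2, one_mul, sub_self]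
  calc prodExpect p (fun a => |∑ i, D i (a i)|)
      ≤ √(prodExpect p fun a => (∑ i, D i (a i)) ^ 2) := prodExpect_abs_le_sqrt hp _
    _ = √(∑ i, ∑ u, p i u * D i u ^ 2) := by
      rw [prodExpect_sq_sum_of_centered (fun i => (hp i).2) D hD]
    _ ≤ √(∑ i, ∑ u, p i u * Y i u ^ 2) :=
      Real.sqrt_le_sqrt (sum_le_sum fun i _ => sum_mul_sub_mean_sq_le (hp i) (Y i))

end ProductLaw

theorem isPmf_nuMF {X U : Type*} [Fintype X] [Fintype U] {μ : X → ℝ}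
    {π : X → (X → ℝ) → U → ℝ} (hμ : IsPmf μ) (hπ : ∀ x, IsPmf (π x μ)) : IsPmf (nuMF μ π) := by
  refine ⟨fun u => sum_nonneg fun x _ => mul_nonneg ((hπ x).1 u) (hμ.1 x), ?_⟩
  simp only [nuMF]
  rw [sum_comm]
  simp only [← sum_mul, (hπ _).2, one_mul, hμ.2]

section Empirical

variable {X U : Type*} [Fintype X] [Fintype U] [DecidableEq X] {N : ℕ}

theorem sum_mul_emp (s : Fin N → X) (F : X → ℝ) :
    ∑ x, F x * emp s x = (∑ i, F (s i)) / N := by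
  simp only [emp, mul_div_assoc', ← sum_div, mul_sum, mul_ite, mul_one, mul_zero]
  rw [sum_comm]
  simp only [sum_ite_eq, mem_univ, if_true]

theorem isPmf_emp (hN : 0 < N) (s : Fin N → X) : IsPmf (emp s) := by
  refine ⟨fun x => div_nonneg (sum_nonneg fun i _ => ?_) N.cast_nonneg, ?_⟩
  · split_ifs <;> norm_num
  · simpa [Fintype.card_fin, hN.ne'] using sum_mul_emp s (fun _ => 1)

theorem nuMF_emp (s : Fin N → X) (π : X → (X → ℝ) → U → ℝ) (u : U) :
    nuMF (emp s) π u = (∑ i, π (s i) (emp s) u) / N :=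
  sum_mul_emp s fun x => π x (emp s) u

theorem rMF_emp (r : X → U → (X → ℝ) → (U → ℝ) → ℝ) (s : Fin N → X)
    (π : X → (X → ℝ) → U → ℝ) :
    rMF r (emp s) π
      = (1 / N : ℝ) * ∑ i, ∑ u, π (s i) (emp s) u * r (s i) u (emp s) (nuMF (emp s) π) := by
  simp only [rMF, ← sum_mul]
  rw [sum_mul_emp, div_eq_inv_mul, one_div]
  simp only [mul_comm]

end Empirical

theorem abs_avg_sub_avg_le {N : ℕ} (hN : 0 < N) {f g : Fin N → ℝ} {c : ℝ}
    (h : ∀ i, |f i - g i| ≤ c) :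
    |(1 / N : ℝ) * ∑ i, f i - (1 / N : ℝ) * ∑ i, g i| ≤ c := by
  have hN' : (0 : ℝ) < N := Nat.cast_pos.2 hN
  rw [← mul_sub, ← sum_sub_distrib, abs_mul, abs_of_pos (one_div_pos.2 hN')]
  calc (1 / N : ℝ) * |∑ i, (f i - g i)| ≤ (1 / N : ℝ) * (N * c) := by
        gcongr
        simpa using (abs_sum_le_sum_abs _ _).trans (sum_le_sum (s := univ) fun i _ => h i)
    _ = c := by field_simp

section Concentration

variable {U : Type*} [Fintype U] {N : ℕ} {p : Fin N → U → ℝ}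

theorem one_div_mul_sqrt_mul (N : ℕ) (c : ℝ) : (1 / N : ℝ) * (√N * c) = c / √N := by
  rw [← mul_assoc, one_div_mul_eq_div, Real.sqrt_div_self', one_div_mul_eq_div]

theorem prodExpect_abs_avg_sub_avg_mean_le (hp : ∀ i, IsPmf (p i)) {Y : Fin N → U → ℝ} {M : ℝ}
    (hM : 0 ≤ M) (hY : ∀ i u, |Y i u| ≤ M) :
    prodExpect p (fun a => |(1 / N : ℝ) * ∑ i, Y i (a i) - (1 / N : ℝ) * ∑ i, ∑ u, p i u * Y i u|)
      ≤ M / √N := by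
  have hsecond (i : Fin N) : ∑ u, p i u * Y i u ^ 2 ≤ M ^ 2 :=
    calc ∑ u, p i u * Y i u ^ 2 ≤ ∑ u, p i u * M ^ 2 := sum_le_sum fun u _ =>
          mul_le_mul_of_nonneg_left (sq_le_sq' (abs_le.1 (hY i u)).1 (abs_le.1 (hY i u)).2)
            ((hp i).1 u)
      _ = M ^ 2 := by rw [← sum_mul, (hp i).2, one_mul]
  calc prodExpect p
        (fun a => |(1 / N : ℝ) * ∑ i, Y i (a i) - (1 / N : ℝ) * ∑ i, ∑ u, p i u * Y i u|)
      = (1 / N : ℝ) * prodExpect p (fun a => |∑ i, (Y i (a i) - ∑ u, p i u * Y i u)|) := by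
        rw [← prodExpect_const_mul]
        simp only [← mul_sub, ← sum_sub_distrib, abs_mul,
          abs_of_nonneg (by positivity : (0 : ℝ) ≤ 1 / N)]
    _ ≤ (1 / N : ℝ) * √(∑ i, ∑ u, p i u * Y i u ^ 2) := by
        gcongr
        exact prodExpect_abs_sum_sub_mean_le hp Y
    _ ≤ (1 / N : ℝ) * √(N * M ^ 2) := by
        gcongr
        simpa using sum_le_sum (s := univ) fun i _ => hsecond i
    _ = M / √N := by
        rw [Real.sqrt_mul N.cast_nonneg, Real.sqrt_sq hM, one_div_mul_sqrt_mul]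

theorem prodExpect_l1_emp_sub_le [DecidableEq U] (hp : ∀ i, IsPmf (p i)) :
    prodExpect p (fun a => l1 fun u => emp a u - (∑ i, p i u) / N)
      ≤ √(Fintype.card U) / √N := by
  have hdev (a : Fin N → U) (u : U) : emp a u - (∑ i, p i u) / N = (1 / N : ℝ) *
      ∑ i, ((if a i = u then 1 else 0) - ∑ v, p i v * if v = u then 1 else 0) := by
    simp only [emp, mul_ite, mul_one, mul_zero, sum_ite_eq', mem_univ, if_true, sum_sub_distrib]
    ring
  have hmass : ∑ u, ∑ i, p i u = N := by
    rw [sum_comm]; simp [fun i => (hp i).2]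
  calc prodExpect p (fun a => l1 fun u => emp a u - (∑ i, p i u) / N)
      = (1 / N : ℝ) * ∑ u, prodExpect p (fun a =>
          |∑ i, ((if a i = u then 1 else 0) - ∑ v, p i v * if v = u then 1 else 0)|) := by
        simp only [l1, hdev, abs_mul, abs_of_nonneg (by positivity : (0 : ℝ) ≤ 1 / N),
          prodExpect_sum, prodExpect_const_mul]
        rw [mul_sum]
    _ ≤ (1 / N : ℝ) * ∑ u, √(∑ i, p i u) := by
        gcongr with u
        simpa [ite_pow] using prodExpect_abs_sum_sub_mean_le hp fun _ v => if v = u then 1 else 0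
    _ ≤ (1 / N : ℝ) * (√N * √(Fintype.card U)) := by
        gcongr
        simpa [hmass] using Real.sum_sqrt_mul_sqrt_le univ (f := fun u => ∑ i, p i u)
          (g := fun _ => 1) (fun u => sum_nonneg fun i _ => (hp i).1 u) fun _ => zero_le_one
    _ = √(Fintype.card U) / √N := one_div_mul_sqrt_mul N _

end Concentration

/-- Lemma 6: conditioned on the joint state `x`, with actions sampled independently via
`π`, the expected deviation of the `N`-agent average reward from the mean-field reward
`r^MF(emp x, π)` is at most `M_R/√N + L_R √|U|/√N`.  The expectation is written out as
a sum over joint actions weighted by the product law. -/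
theorem empirical_average_reward_bound
    {X U : Type*} [Fintype X] [Fintype U] [DecidableEq X] [DecidableEq U]
    (N : ℕ) (hN : 0 < N)
    (M_R L_R : ℝ) (hMR : 0 < M_R) (hLR : 0 < L_R)
    (r : X → U → (X → ℝ) → (U → ℝ) → ℝ)
    (hbdd : ∀ x u μ ν, IsPmf μ → IsPmf ν → |r x u μ ν| ≤ M_R)
    (hrLip : ∀ x u μ₁ μ₂ ν₁ ν₂, IsPmf μ₁ → IsPmf μ₂ → IsPmf ν₁ → IsPmf ν₂ →
      |r x u μ₁ ν₁ - r x u μ₂ ν₂|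
        ≤ L_R * (l1 (fun x' => μ₁ x' - μ₂ x') + l1 (fun u' => ν₁ u' - ν₂ u')))
    (π : X → (X → ℝ) → U → ℝ)
    (hπ : ∀ x μ, IsPmf μ → IsPmf (π x μ))
    (x : Fin N → X) :
    ∑ a : Fin N → U, (∏ i, π (x i) (emp x) (a i)) *
        |(1 / N : ℝ) * ∑ i, r (x i) (a i) (emp x) (emp a) - rMF r (emp x) π|
      ≤ M_R / Real.sqrt N + L_R * Real.sqrt (Fintype.card U) / Real.sqrt N := by
  set μ := emp x
  set ν := nuMF μ π
  set p : Fin N → U → ℝ := fun i => π (x i) μ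
  have hμ : IsPmf μ := isPmf_emp hN x
  have hp (i : Fin N) : IsPmf (p i) := hπ (x i) μ hμ
  have hν : IsPmf ν := isPmf_nuMF hμ fun x' => hπ x' μ hμ
  have hν_avg (u : U) : ν u = (∑ i, p i u) / N := nuMF_emp x π u
  have hrMF : rMF r μ π = (1 / N : ℝ) * ∑ i, ∑ u, p i u * r (x i) u μ ν := rMF_emp r x π
  have hsplit (a : Fin N → U) :
      |(1 / N : ℝ) * ∑ i, r (x i) (a i) μ (emp a) - rMF r μ π|
        ≤ L_R * l1 (fun u => emp a u - ν u)
          + |(1 / N : ℝ) * ∑ i, r (x i) (a i) μ ν - rMF r μ π| := by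
    have hlip (i : Fin N) :
        |r (x i) (a i) μ (emp a) - r (x i) (a i) μ ν| ≤ L_R * l1 (fun u => emp a u - ν u) := by
      simpa [l1] using hrLip (x i) (a i) μ μ (emp a) ν hμ hμ (isPmf_emp hN a) hν
    refine (abs_sub_le _ ((1 / N : ℝ) * ∑ i, r (x i) (a i) μ ν) _).trans (add_le_add_left ?_ _)
    exact abs_avg_sub_avg_le hN hlip
  calc ∑ a : Fin N → U, (∏ i, π (x i) (emp x) (a i)) *
        |(1 / N : ℝ) * ∑ i, r (x i) (a i) (emp x) (emp a) - rMF r (emp x) π|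
      ≤ prodExpect p (fun a => L_R * l1 (fun u => emp a u - (∑ i, p i u) / N)
          + |(1 / N : ℝ) * ∑ i, r (x i) (a i) μ ν - rMF r μ π|) :=
        prodExpect_mono (fun i => (hp i).1) fun a => by simpa only [hν_avg] using hsplit a
    _ = L_R * prodExpect p (fun a => l1 (fun u => emp a u - (∑ i, p i u) / N))
          + prodExpect p (fun a => |(1 / N : ℝ) * ∑ i, r (x i) (a i) μ ν - rMF r μ π|) := by
        rw [prodExpect_add, prodExpect_const_mul]
    _ ≤ L_R * (√(Fintype.card U) / √N) + M_R / √N := by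
        gcongr
        · exact prodExpect_l1_emp_sub_le hp
        · rw [hrMF]
          exact prodExpect_abs_avg_sub_avg_mean_le (Y := fun i u => r (x i) u μ ν) hp hMR.le
            fun i u => hbdd (x i) u μ ν hμ hν
    _ = M_R / Real.sqrt N + L_R * Real.sqrt (Fintype.card U) / Real.sqrt N := by ring
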